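/- arXiv:1604.04148 — 7 statements merged into one kernel-verified Lean document; each statement's English description precedes it below -/
import Mathlib

section
/- For n ≥ 2, there is a bijection between the set H(n) of zero-free degree sequences of length n whose largest part equals n-1 and the set D_0(n-1) of degree sequences of length n-1 allowing zero terms; hence |H(n)| = |D_0(n-1)|. -/
/-- A function `d : Fin n → ℕ` is graphic if it is the degree sequence of a
simple undirected graph on `n` vertices. -/
def Graphic (n : ℕ) (d : Fin n → ℕ) : Prop :=
  ∃ G : SimpleGraph (Fin n), ∀ v, (G.neighborSet v).ncard = d v

/-- Zero-free degree sequences of length `n` (non-increasing, positive, graphic). -/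
def D (n : ℕ) : Set (Fin n → ℕ) :=
  {d | Antitone d ∧ (∀ i, 0 < d i) ∧ Graphic n d}

/-- Degree sequences of length `n` allowing zero terms. -/
def D0 (n : ℕ) : Set (Fin n → ℕ) :=
  {d | Antitone d ∧ Graphic n d}

/-- Zero-free degree sequences of length n with largest part exactly n-1. -/
def H (n : ℕ) : Set (Fin n → ℕ) := {d | d ∈ D n ∧ ∃ i, d i = n - 1}

/-! A degree sequence of length `n` with a part `n - 1` can only be realized by a graph in which
that vertex is adjacent to all others, so deleting it lowers every other degree by one;
conversely, the cone over a graph on `n - 1` vertices raises every degree by one and adds a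
vertex of degree `n - 1`. On sorted sequences the bijection is therefore
`(n - 1, e₁ + 1, …, e_{n-1} + 1) ↔ (e₁, …, e_{n-1})`. -/

open Matrix

namespace SimpleGraph

section Finite

variable {V : Type*} [Finite V] (G : SimpleGraph V) (v : V)

lemma ncard_neighborSet_lt_card : (G.neighborSet v).ncard < Nat.card V :=
  Set.ncard_lt_card fun h => G.irrefl (h ▸ Set.mem_univ v : v ∈ G.neighborSet v)

lemma adj_of_ncard_neighborSet_add_one (h : (G.neighborSet v).ncard + 1 = Nat.card V)
    {w : V} (hw : w ≠ v) : G.Adj v w := by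
  have hsub : G.neighborSet v ⊆ {v}ᶜ := fun w hw h => G.irrefl (h ▸ hw)
  have hcompl : ({v}ᶜ : Set V).ncard = Nat.card V - 1 := by
    rw [Set.ncard_compl, Set.ncard_singleton]
  exact (Set.eq_of_subset_of_ncard_le hsub (by omega)).symm.subset hw

end Finite

variable {m : ℕ}

def cone (G : SimpleGraph (Fin m)) : SimpleGraph (Fin (m + 1)) :=
  G.map (Fin.succEmb m) ⊔ fromRel fun a _ => a = 0

variable (G : SimpleGraph (Fin m))

@[simp] lemma cone_adj_succ_succ (i j : Fin m) : (cone G).Adj i.succ j.succ ↔ G.Adj i j := by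
  simpa [cone, Fin.succ_ne_zero] using map_adj_apply (G := G) (f := Fin.succEmb m)

@[simp] lemma cone_adj_zero_succ (j : Fin m) : (cone G).Adj 0 j.succ := by
  simp [cone, eq_comm, Fin.succ_ne_zero]

@[simp] lemma cone_adj_succ_zero (j : Fin m) : (cone G).Adj j.succ 0 :=
  (cone_adj_zero_succ G j).symm

lemma neighborSet_cone_zero : (cone G).neighborSet 0 = {0}ᶜ := by
  ext w
  cases w using Fin.cases <;> simp [Fin.succ_ne_zero]

lemma neighborSet_cone_succ (j : Fin m) :
    (cone G).neighborSet j.succ = insert 0 (Fin.succ '' G.neighborSet j) := by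
  ext w
  cases w using Fin.cases <;> simp

lemma ncard_neighborSet_cone_zero : ((cone G).neighborSet 0).ncard = m := by
  rw [neighborSet_cone_zero, Set.ncard_compl, Set.ncard_singleton, Nat.card_fin, Nat.add_sub_cancel]

lemma ncard_neighborSet_cone_succ (j : Fin m) :
    ((cone G).neighborSet j.succ).ncard = (G.neighborSet j).ncard + 1 := by
  rw [neighborSet_cone_succ, Set.ncard_insert_of_notMem (by simp [Fin.succ_ne_zero]),
    Set.ncard_image_of_injective _ (Fin.succ_injective m)]

lemma cone_comap_succ_eq {G : SimpleGraph (Fin (m + 1))} (h : ∀ w, w ≠ 0 → G.Adj 0 w) :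
    cone (G.comap Fin.succ) = G := by
  ext a b
  cases a using Fin.cases with
  | zero => cases b using Fin.cases with
    | zero => simp
    | succ j => simpa using h _ (Fin.succ_ne_zero j)
  | succ i => cases b using Fin.cases with
    | zero => simpa using (h _ (Fin.succ_ne_zero i)).symm
    | succ j => simp

end SimpleGraph

lemma Graphic.apply_lt {n : ℕ} {d : Fin n → ℕ} (h : Graphic n d) (i : Fin n) : d i < n := by
  obtain ⟨G, hG⟩ := h
  simpa [hG] using G.ncard_neighborSet_lt_card i

lemma graphic_vecCons_iff {m : ℕ} {e : Fin m → ℕ} :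
    Graphic (m + 1) (vecCons m (e + 1)) ↔ Graphic m e := by
  constructor
  · rintro ⟨G, hG⟩
    have hdom : ∀ w, w ≠ 0 → G.Adj 0 w := fun w =>
      G.adj_of_ncard_neighborSet_add_one 0 (by simp [hG])
    refine ⟨G.comap Fin.succ, fun j => ?_⟩
    have := (G.comap Fin.succ).ncard_neighborSet_cone_succ j
    rw [SimpleGraph.cone_comap_succ_eq hdom, hG] at this
    simpa using this.symm
  · rintro ⟨G, hG⟩
    refine ⟨G.cone, Fin.cases ?_ fun j => ?_⟩
    · simp [SimpleGraph.ncard_neighborSet_cone_zero]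
    · simp [SimpleGraph.ncard_neighborSet_cone_succ, hG]

lemma H_eq_image_D0 (m : ℕ) :
    H (m + 2) = (fun e => vecCons (m + 1) (e + 1)) '' D0 (m + 1) := by
  ext d
  constructor
  · rintro ⟨⟨hanti, hpos, hd⟩, i, hi⟩
    have h0 : d 0 = m + 1 := le_antisymm (Nat.le_of_lt_succ (Graphic.apply_lt hd 0))
      (by have := hanti (Fin.zero_le i); omega)
    set e : Fin (m + 1) → ℕ := fun j => d j.succ - 1
    have hd_eq : vecCons (m + 1) (e + 1) = d := by
      ext j
      cases j using Fin.cases with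
      | zero => exact h0.symm
      | succ j => simpa [e] using Nat.sub_add_cancel (hpos j.succ)
    rw [← hd_eq] at hanti hd
    refine ⟨e, ⟨fun a b hab => ?_, graphic_vecCons_iff.mp hd⟩, hd_eq⟩
    simpa using (antitone_vecCons.mp hanti).2 hab
  · rintro ⟨e, ⟨hanti, he⟩, rfl⟩
    refine ⟨⟨antitone_vecCons.mpr ⟨Graphic.apply_lt he 0, hanti.add_const 1⟩,
      Fin.cases ?_ fun j => ?_, graphic_vecCons_iff.mpr he⟩, 0, rfl⟩ <;> simp

lemma injective_vecCons_add_one (a : ℕ) {m : ℕ} :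
    Function.Injective fun e : Fin m → ℕ => vecCons a (e + 1) :=
  fun _ _ h => add_left_injective 1 (Fin.cons_right_injective (α := fun _ => ℕ) a h)

theorem H_equiv_D0 (n : ℕ) (hn : 2 ≤ n) :
    Nonempty (H n ≃ D0 (n - 1)) ∧ (H n).ncard = (D0 (n - 1)).ncard := by
  obtain ⟨m, rfl⟩ : ∃ m, n = m + 2 := ⟨n - 2, by omega⟩
  let φ : H (m + 2) ≃ D0 (m + 1) := (Equiv.setCongr (H_eq_image_D0 m)).trans
    (Equiv.Set.image _ _ (injective_vecCons_add_one _)).symm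
  exact ⟨⟨φ⟩, Nat.card_congr φ⟩
end

section
/- For n ≥ 2 and even N with 2(n-1) ≤ N ≤ n(n-1), |H'(N,n)| = |H'((n+2)(n-1)-N,n)|, where H'(N,n) is the set of graphical partitions of N with exactly n positive parts and largest part exactly n-1. -/
/-- Graphical partitions of N with exactly n (positive) parts, largest part exactly n-1. -/
def H' (N n : ℕ) : Set (Fin n → ℕ) :=
  {d | Antitone d ∧ (∀ i, 0 < d i) ∧ (∃ i, d i = n - 1) ∧ Graphic n d ∧ ∑ i, d i = N}

/-!
Let `G` realize `d` with `d 0 = n - 1`. In `Gᶜ` the vertex `0` is isolated and every other vertex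
`i` has degree `n - 1 - d i`; joining `0` to all other vertices gives the degrees
`n - 1, n - d 1, …, n - d (n-1)`. Sorted, this is `n - 1 ≥ n - d_n ≥ … ≥ n - d_2`, the map is an
involution on sequences with largest part `n - 1`, and the two sums add up to
`(n - 1) + (n - 1) * (n + 1) = (n + 2) * (n - 1)`.
-/

open Finset SimpleGraph

theorem SimpleGraph.ncard_neighborSet_eq_degree {V : Type*} (G : SimpleGraph V) (v : V)
    [Fintype (G.neighborSet v)] : (G.neighborSet v).ncard = G.degree v := by
  rw [← coe_neighborFinset, Set.ncard_coe_finset, card_neighborFinset_eq_degree]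

namespace Graphic

variable {n : ℕ} {d : Fin n → ℕ}

open Classical in
theorem iff_exists_degree_eq : Graphic n d ↔ ∃ G : SimpleGraph (Fin n), ∀ v, G.degree v = d v := by
  simp only [Graphic, ncard_neighborSet_eq_degree]

theorem le_sub_one (h : Graphic n d) (v : Fin n) : d v ≤ n - 1 := by
  classical
  obtain ⟨G, hG⟩ := iff_exists_degree_eq.1 h
  have := G.degree_lt_card_verts v
  rw [hG, Fintype.card_fin] at this
  omega

theorem comp_perm (h : Graphic n d) (π : Equiv.Perm (Fin n)) : Graphic n (d ∘ π) := by
  classical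
  obtain ⟨G, hG⟩ := iff_exists_degree_eq.1 h
  refine iff_exists_degree_eq.2 ⟨G.comap π, fun v => ?_⟩
  rw [Function.comp_apply, ← hG]
  convert ((Iso.comap π G).degree_eq v).symm; rfl

theorem compl (h : Graphic n d) : Graphic n (fun v => n - 1 - d v) := by
  classical
  obtain ⟨G, hG⟩ := iff_exists_degree_eq.1 h
  refine iff_exists_degree_eq.2 ⟨Gᶜ, fun v => ?_⟩
  rw [degree_compl, hG, Fintype.card_fin]

/-- Join the isolated vertex `v` to every other vertex. -/
theorem cone_of_eq_zero (h : Graphic n d) {v : Fin n} (hv : d v = 0) :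
    Graphic n (Function.update (d + 1) v (n - 1)) := by
  obtain ⟨G, hG⟩ := h
  have hisol : G.neighborSet v = ∅ := (Set.ncard_eq_zero).1 ((hG v).trans hv)
  refine ⟨G ⊔ fromRel (fun a _ => a = v), fun w => ?_⟩
  rw [neighborSet_sup]
  rcases eq_or_ne w v with rfl | hw
  · have : (fromRel (fun a _ => a = w)).neighborSet w = {w}ᶜ := by
      ext u; simp [eq_comm]
    rw [hisol, this, Set.empty_union, Set.ncard_compl, Set.ncard_singleton, Nat.card_eq_fintype_card,
      Fintype.card_fin, Function.update_self]
  · have : (fromRel (fun a _ => a = v)).neighborSet w = {v} := by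
      ext u; simp only [mem_neighborSet, fromRel_adj, Set.mem_singleton_iff]; grind
    have hv : v ∉ G.neighborSet w := fun hvw => by
      simpa [hisol] using (G.mem_neighborSet _ _).2 ((G.mem_neighborSet _ _).1 hvw).symm
    rw [this, Set.union_singleton, Set.ncard_insert_of_notMem hv, hG, Function.update_of_ne hw]
    rfl

end Graphic

namespace H'

variable {n N : ℕ} {d : Fin n → ℕ}

theorem le_sub_one (hd : d ∈ H' N n) (i : Fin n) : d i ≤ n - 1 :=
  hd.2.2.2.1.le_sub_one i

theorem apply_zero [NeZero n] (hd : d ∈ H' N n) : d 0 = n - 1 := by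
  obtain ⟨i, hi⟩ := hd.2.2.1
  have := hd.1 (Fin.zero_le i)
  have := le_sub_one hd 0
  omega

end H'

section HavelHakimiDual

variable {n : ℕ} [NeZero n] {d : Fin n → ℕ}

/-- On `Fin n`, `-i = n - i` for `i ≠ 0`, so `hhDual d` lists
`n - 1, n - d (n-1), …, n - d 1`. -/
def hhDual (d : Fin n → ℕ) : Fin n → ℕ := fun i => if i = 0 then n - 1 else n - d (-i)

theorem hhDual_neg (d : Fin n → ℕ) (i : Fin n) :
    hhDual d (-i) = if i = 0 then n - 1 else n - d i := by
  simp [hhDual]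

theorem Graphic.hhDual (h : Graphic n d) (h0 : d 0 = n - 1) : Graphic n (hhDual d) := by
  have hcone := h.compl.cone_of_eq_zero (v := 0) (by simp [h0])
  convert hcone.comp_perm (Equiv.neg (Fin n)) using 1
  funext i
  have := h.le_sub_one (-i)
  rcases eq_or_ne i 0 with rfl | hi
  · simp [_root_.hhDual]
  · simp only [_root_.hhDual, hi, ↓reduceIte, Equiv.neg_apply, Function.comp_apply, ne_eq,
      neg_eq_zero, not_false_eq_true, Function.update_of_ne, Pi.add_apply, Pi.one_apply]
    omega

theorem hhDual_hhDual (h0 : d 0 = n - 1) (hle : ∀ i, d i ≤ n - 1) : hhDual (hhDual d) = d := by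
  funext i
  rcases eq_or_ne i 0 with rfl | hi
  · simp [hhDual, h0]
  · have := hle i
    simp only [hhDual, hi, neg_eq_zero, if_false, neg_neg]
    omega

theorem hhDual_antitone (hd : Antitone d) (hpos : ∀ i, 0 < d i) : Antitone (hhDual d) := by
  intro i j hij
  rcases eq_or_ne j 0 with rfl | hj
  · rw [nonpos_iff_eq_zero.1 hij]
  have := hpos (-j)
  rcases eq_or_ne i 0 with rfl | hi
  · simp only [hhDual, hj, ↓reduceIte]
    omega
  have : -j ≤ -i := by
    rw [Fin.le_def, Fin.val_neg, Fin.val_neg, if_neg hi, if_neg hj]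
    have := Fin.le_def.1 hij
    omega
  simp only [hhDual, hi, hj, if_false]
  have := hd this
  omega

theorem sum_hhDual_add_sum (h0 : d 0 = n - 1) (hle : ∀ i, d i ≤ n - 1) :
    ∑ i, hhDual d i + ∑ i, d i = (n + 2) * (n - 1) := by
  have hterm : ∀ i ∈ ({0}ᶜ : Finset (Fin n)), hhDual d (-i) + d i = n := by
    intro i hi
    have := hle i
    rw [hhDual_neg, if_neg (by simpa using hi)]
    omega
  calc ∑ i, hhDual d i + ∑ i, d i = ∑ i, (hhDual d (-i) + d i) := by
        rw [sum_add_distrib, ← Equiv.sum_comp (Equiv.neg (Fin n)) (hhDual d)]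
        rfl
    _ = (hhDual d (-0) + d 0) + ∑ i ∈ {0}ᶜ, (hhDual d (-i) + d i) :=
        Fintype.sum_eq_add_sum_compl 0 _
    _ = (n + 2) * (n - 1) := by
        rw [sum_congr rfl hterm, sum_const, card_compl, card_singleton, Fintype.card_fin,
          hhDual_neg, if_pos rfl, h0, smul_eq_mul]
        ring

theorem hhDual_mem_H' {N : ℕ} (hd : d ∈ H' N n) : hhDual d ∈ H' ((n + 2) * (n - 1) - N) n := by
  have h0 := H'.apply_zero hd
  obtain ⟨hanti, hpos, -, hg, rfl⟩ := hd
  have hle := hg.le_sub_one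
  have hd0 := hpos 0
  refine ⟨hhDual_antitone hanti hpos, fun i => ?_, ⟨0, by simp [hhDual]⟩, hg.hhDual h0, ?_⟩
  · have := hle (-i)
    unfold hhDual
    split_ifs <;> omega
  · have := sum_hhDual_add_sum h0 hle
    omega

end HavelHakimiDual

theorem H'_symmetry_general (n N : ℕ) (hn : 2 ≤ n)
    (h2 : N ≤ n * (n - 1)) :
    (H' N n).ncard = (H' ((n + 2) * (n - 1) - N) n).ncard := by
  have : NeZero n := ⟨by omega⟩
  have hinv : Set.InvOn hhDual hhDual (H' N n) (H' ((n + 2) * (n - 1) - N) n) :=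
    ⟨fun e he => hhDual_hhDual (H'.apply_zero he) (H'.le_sub_one he),
      fun d hd => hhDual_hhDual (H'.apply_zero hd) (H'.le_sub_one hd)⟩
  refine (hinv.bijOn (fun d => hhDual_mem_H') fun e he => ?_).ncard_eq
  have hN : (n + 2) * (n - 1) - ((n + 2) * (n - 1) - N) = N := by
    have : (n + 2) * (n - 1) = n * (n - 1) + 2 * (n - 1) := by ring
    omega
  simpa only [hN] using hhDual_mem_H' he

theorem H'_symmetry (n N : ℕ) (hn : 2 ≤ n) (hN : Even N)
    (h1 : 2 * (n - 1) ≤ N) (h2 : N ≤ n * (n - 1)) :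
    (H' N n).ncard = (H' ((n + 2) * (n - 1) - N) n).ncard :=
  H'_symmetry_general n N hn h2
end

section
/- For n ≥ 3, there is a bijection between B(n) (zero-free degree sequences of length n with largest part exactly n-1 and smallest part exactly 1) and D_0(n-2) (degree sequences of length n-2 allowing zero terms); hence |B(n)| = |D_0(n-2)|. -/
/-- Zero-free degree sequences of length n with largest part exactly n-1 and
smallest part exactly 1. -/
def B (n : ℕ) : Set (Fin n → ℕ) := {d | d ∈ D n ∧ (∃ i, d i = n - 1) ∧ ∃ i, d i = 1}

/-!
A graph realizing a sequence of `B (m + 2)` has a vertex `u` adjacent to all others and a vertex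
`x` whose only neighbour is `u`. Deleting `u` and `x` lowers every other degree by exactly one:
each remaining vertex loses its edge to `u` and has none to `x`. Conversely, adding an isolated
vertex and then a dominating vertex to a graph on `m` vertices raises every degree by one and
creates the degrees `m + 1` and `1`. On sequences these are mutually inverse: drop the first and
last terms and subtract one, resp. add one and put `m + 1` in front and `1` at the end.
-/

open Set

lemma Set.ncard_compl_singleton {V : Type*} [Finite V] (v : V) :
    ({v}ᶜ : Set V).ncard = Nat.card V - 1 := by
  rw [ncard_compl, ncard_singleton]

namespace SimpleGraph

variable {V W : Type*}

lemma neighborSet_subset_compl_singleton (G : SimpleGraph V) (v : V) :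
    G.neighborSet v ⊆ {v}ᶜ :=
  fun _ h => (G.ne_of_adj h).symm

lemma ncard_neighborSet_le [Finite V] (G : SimpleGraph V) (v : V) :
    (G.neighborSet v).ncard ≤ Nat.card V - 1 := by
  simpa [ncard_compl_singleton] using ncard_le_ncard (G.neighborSet_subset_compl_singleton v)

lemma isUniversal_of_ncard_neighborSet [Finite V] {G : SimpleGraph V} {v : V}
    (h : (G.neighborSet v).ncard = Nat.card V - 1) : G.IsUniversal v :=
  IsUniversal.of_neighborSet_eq <| eq_of_subset_of_ncard_le
    (G.neighborSet_subset_compl_singleton v) (by rw [ncard_compl_singleton, h])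

lemma neighborSet_map_of_notMem_range (H : SimpleGraph W) (f : W ↪ V) {v : V}
    (hv : v ∉ range f) : (H.map f).neighborSet v = ∅ :=
  eq_empty_of_forall_notMem fun _ ⟨_, _, _, _, hu, _⟩ => hv ⟨_, hu⟩

section Deletion

variable {G : SimpleGraph V} {u x : V} (f : W ↪ V)

lemma neighborSet_eq_insert_image_comap (hu : G.IsUniversal u) (hx : G.neighborSet x = {u})
    (hfu : u ∉ range f) (hf : ∀ v, v ≠ u → v ≠ x → v ∈ range f) (i : W) :
    G.neighborSet (f i) = insert u (f '' (G.comap f).neighborSet i) := by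
  ext w
  constructor
  · intro hw
    by_cases hwu : w = u
    · exact Or.inl hwu
    have hwx : w ≠ x := by
      rintro rfl
      have : f i ∈ G.neighborSet w := hw.symm
      exact hfu ⟨i, by rwa [hx, mem_singleton_iff] at this⟩
    obtain ⟨j, rfl⟩ := hf w hwu hwx
    exact Or.inr ⟨j, hw, rfl⟩
  · rintro (rfl | ⟨j, hj, rfl⟩)
    · exact (hu fun h => hfu ⟨i, h.symm⟩).symm
    · exact hj

lemma ncard_neighborSet_comap_add_one [Finite V] (hu : G.IsUniversal u)
    (hx : (G.neighborSet x).ncard = 1) (hxu : x ≠ u) (hfu : u ∉ range f)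
    (hf : ∀ v, v ≠ u → v ≠ x → v ∈ range f) (i : W) :
    ((G.comap f).neighborSet i).ncard + 1 = (G.neighborSet (f i)).ncard := by
  have hx' : G.neighborSet x = {u} := by
    obtain ⟨a, ha⟩ := ncard_eq_one.mp hx
    have hux : u ∈ G.neighborSet x := (hu hxu.symm).symm
    rw [ha, mem_singleton_iff] at hux
    rw [ha, hux]
  rw [neighborSet_eq_insert_image_comap f hu hx' hfu hf i,
    ncard_insert_of_notMem (by rintro ⟨j, -, hj⟩; exact hfu ⟨j, hj⟩),
    ncard_image_of_injective _ f.injective]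

end Deletion

section Addition

variable (H : SimpleGraph W) (f : W ↪ V) {u : V}

lemma neighborSet_map_sup_starGraph_self (hfu : u ∉ range f) :
    (H.map f ⊔ starGraph u).neighborSet u = {u}ᶜ := by
  rw [neighborSet_sup, neighborSet_map_of_notMem_range H f hfu, empty_union,
    isUniversal_starGraph_self.neighborSet_eq]

lemma neighborSet_map_sup_starGraph_of_notMem_range {v : V} (hv : v ∉ range f) (hvu : v ≠ u) :
    (H.map f ⊔ starGraph u).neighborSet v = {u} := by
  ext w
  simp only [neighborSet_sup, neighborSet_map_of_notMem_range H f hv, empty_union,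
    mem_neighborSet, starGraph_adj, mem_singleton_iff]
  grind

lemma neighborSet_map_sup_starGraph_apply (hfu : u ∉ range f) (i : W) :
    (H.map f ⊔ starGraph u).neighborSet (f i) = insert u (f '' H.neighborSet i) := by
  ext w
  simp only [neighborSet_sup, neighborSet_map, mem_union, mem_insert_iff, mem_neighborSet,
    starGraph_adj]
  grind

lemma ncard_neighborSet_map_sup_starGraph_apply [Finite V] (hfu : u ∉ range f) (i : W) :
    ((H.map f ⊔ starGraph u).neighborSet (f i)).ncard = (H.neighborSet i).ncard + 1 := by
  rw [neighborSet_map_sup_starGraph_apply H f hfu,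
    ncard_insert_of_notMem (by rintro ⟨j, -, hj⟩; exact hfu ⟨j, hj⟩),
    ncard_image_of_injective _ f.injective]

end Addition

end SimpleGraph

def midEmb (m : ℕ) : Fin m ↪ Fin (m + 2) := Fin.castSuccEmb.trans (Fin.succEmb _)

section MiddleVertices

variable {m : ℕ}

lemma midEmb_apply (i : Fin m) : midEmb m i = i.castSucc.succ := rfl

lemma zero_notMem_range_midEmb : (0 : Fin (m + 2)) ∉ range (midEmb m) := by
  rintro ⟨i, hi⟩
  exact Fin.succ_ne_zero _ hi

lemma last_notMem_range_midEmb : Fin.last (m + 1) ∉ range (midEmb m) := by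
  rintro ⟨i, hi⟩
  simp [midEmb_apply, ← Fin.succ_last] at hi

lemma eq_zero_or_eq_last_or_mem_range_midEmb (v : Fin (m + 2)) :
    v = 0 ∨ v = Fin.last (m + 1) ∨ v ∈ range (midEmb m) := by
  induction v using Fin.cases with
  | zero => exact Or.inl rfl
  | succ w =>
    induction w using Fin.lastCases with
    | last => exact Or.inr (Or.inl (Fin.succ_last m))
    | cast i => exact Or.inr (Or.inr ⟨i, rfl⟩)

lemma mem_range_midEmb {v : Fin (m + 2)} (h0 : v ≠ 0) (hl : v ≠ Fin.last (m + 1)) :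
    v ∈ range (midEmb m) :=
  ((eq_zero_or_eq_last_or_mem_range_midEmb v).resolve_left h0).resolve_left hl

lemma midEmb_le_midEmb {a b : Fin m} : midEmb m a ≤ midEmb m b ↔ a ≤ b := by
  simp [midEmb_apply]

end MiddleVertices

section Sequences

variable {m : ℕ}

def trimSeq (d : Fin (m + 2) → ℕ) (i : Fin m) : ℕ := d (midEmb m i) - 1

def extendSeq (e : Fin m → ℕ) : Fin (m + 2) → ℕ :=
  Fin.cons (m + 1) (Fin.snoc (fun i => e i + 1) 1)

@[simp] lemma extendSeq_zero (e : Fin m → ℕ) : extendSeq e 0 = m + 1 := rfl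

@[simp] lemma extendSeq_last (e : Fin m → ℕ) : extendSeq e (Fin.last (m + 1)) = 1 := by
  simp [extendSeq, ← Fin.succ_last]

@[simp] lemma extendSeq_midEmb (e : Fin m → ℕ) (i : Fin m) :
    extendSeq e (midEmb m i) = e i + 1 := by
  simp [extendSeq, midEmb_apply]

@[simp] lemma trimSeq_extendSeq (e : Fin m → ℕ) : trimSeq (extendSeq e) = e := by
  ext i
  simp [trimSeq]

lemma extendSeq_pos (e : Fin m → ℕ) (v : Fin (m + 2)) : 0 < extendSeq e v := by
  rcases eq_zero_or_eq_last_or_mem_range_midEmb v with rfl | rfl | ⟨i, rfl⟩ <;> simp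

lemma extendSeq_le {e : Fin m → ℕ} (he : ∀ i, e i ≤ m) (v : Fin (m + 2)) :
    extendSeq e v ≤ m + 1 := by
  rcases eq_zero_or_eq_last_or_mem_range_midEmb v with rfl | rfl | ⟨i, rfl⟩ <;> simp [he]

lemma extendSeq_antitone {e : Fin m → ℕ} (he : Antitone e) (hle : ∀ i, e i ≤ m) :
    Antitone (extendSeq e) := by
  intro v w hvw
  rcases eq_zero_or_eq_last_or_mem_range_midEmb v with rfl | rfl | ⟨a, rfl⟩
  · simpa using extendSeq_le hle w
  · rw [Fin.last_le_iff.mp hvw]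
  rcases eq_zero_or_eq_last_or_mem_range_midEmb w with rfl | rfl | ⟨b, rfl⟩
  · exact absurd hvw (by simp [midEmb_apply])
  · simp
  · simpa using he (midEmb_le_midEmb.mp hvw)

end Sequences

section DegreeSequences

variable {m : ℕ} {d : Fin (m + 2) → ℕ}

lemma apply_zero_of_mem_B (hd : d ∈ B (m + 2)) : d 0 = m + 1 := by
  obtain ⟨⟨hanti, -, G, hG⟩, ⟨i, hi⟩, -⟩ := hd
  have hle := G.ncard_neighborSet_le 0
  have hi0 := hanti (Fin.zero_le i)
  simp only [hG, Nat.card_eq_fintype_card, Fintype.card_fin] at hle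
  omega

lemma apply_last_of_mem_B (hd : d ∈ B (m + 2)) : d (Fin.last (m + 1)) = 1 := by
  obtain ⟨⟨hanti, hpos, -⟩, -, ⟨i, hi⟩⟩ := hd
  have hil := hanti (Fin.le_last i)
  have hpos := hpos (Fin.last _)
  omega

lemma extendSeq_trimSeq (hd : d ∈ B (m + 2)) : extendSeq (trimSeq d) = d := by
  ext v
  rcases eq_zero_or_eq_last_or_mem_range_midEmb v with rfl | rfl | ⟨i, rfl⟩
  · simp [apply_zero_of_mem_B hd]
  · simp [apply_last_of_mem_B hd]
  · have := hd.1.2.1 (midEmb m i)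
    simp only [extendSeq_midEmb, trimSeq]
    omega

lemma trimSeq_mem_D0 (hd : d ∈ B (m + 2)) : trimSeq d ∈ D0 m := by
  obtain ⟨hanti, hpos, G, hG⟩ := hd.1
  refine ⟨fun a b hab => Nat.sub_le_sub_right (hanti (midEmb_le_midEmb.mpr hab)) 1,
    G.comap (midEmb m), fun i => ?_⟩
  have hu : G.IsUniversal 0 :=
    SimpleGraph.isUniversal_of_ncard_neighborSet (by simp [hG, apply_zero_of_mem_B hd])
  have hdeg := G.ncard_neighborSet_comap_add_one (midEmb m) hu
    (by rw [hG, apply_last_of_mem_B hd]) Fin.last_pos.ne' zero_notMem_range_midEmb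
    (fun _ => mem_range_midEmb) i
  have := hpos (midEmb m i)
  rw [hG] at hdeg
  simp only [trimSeq]
  omega

lemma extendSeq_mem_B {e : Fin m → ℕ} (he : e ∈ D0 m) : extendSeq e ∈ B (m + 2) := by
  obtain ⟨hanti, H, hH⟩ := he
  have hle (i : Fin m) : e i ≤ m := by
    have := H.ncard_neighborSet_le i
    simp only [hH, Nat.card_eq_fintype_card, Fintype.card_fin] at this
    omega
  refine ⟨⟨extendSeq_antitone hanti hle, extendSeq_pos e,
    H.map (midEmb m) ⊔ SimpleGraph.starGraph 0, fun v => ?_⟩,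
    ⟨0, by simp⟩, ⟨Fin.last _, by simp⟩⟩
  rcases eq_zero_or_eq_last_or_mem_range_midEmb v with rfl | rfl | ⟨i, rfl⟩
  · rw [H.neighborSet_map_sup_starGraph_self _ zero_notMem_range_midEmb, ncard_compl_singleton]
    simp
  · rw [H.neighborSet_map_sup_starGraph_of_notMem_range _ last_notMem_range_midEmb
      Fin.last_pos.ne', ncard_singleton, extendSeq_last]
  · rw [H.ncard_neighborSet_map_sup_starGraph_apply _ zero_notMem_range_midEmb, hH,
      extendSeq_midEmb]

end DegreeSequences

def trimEquiv (m : ℕ) : B (m + 2) ≃ D0 m where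
  toFun d := ⟨trimSeq d, trimSeq_mem_D0 d.2⟩
  invFun e := ⟨extendSeq e, extendSeq_mem_B e.2⟩
  left_inv d := Subtype.ext (extendSeq_trimSeq d.2)
  right_inv e := Subtype.ext (trimSeq_extendSeq e.1)

theorem B_equiv_D0 (n : ℕ) (hn : 3 ≤ n) :
    Nonempty (B n ≃ D0 (n - 2)) ∧ (B n).ncard = (D0 (n - 2)).ncard := by
  obtain ⟨m, rfl⟩ : ∃ m, n = m + 2 := ⟨n - 2, by omega⟩
  rw [Nat.add_sub_cancel, ← Nat.card_coe_set_eq, ← Nat.card_coe_set_eq]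
  exact ⟨⟨trimEquiv m⟩, Nat.card_congr (trimEquiv m)⟩
end

section
/- For n ≥ 3, there is a bijection between W(n), the set of zero-free degree sequences of length n with largest part less than n-1 and smallest part exactly 1, and S(n), the set of zero-free degree sequences of length n with largest part exactly n-2; hence |W(n)| = |S(n)|. -/
/-- Zero-free degree sequences of length n with largest part < n-1 and
smallest part exactly 1. -/
def W (n : ℕ) : Set (Fin n → ℕ) := {d | d ∈ D n ∧ (∀ i, d i < n - 1) ∧ ∃ i, d i = 1}

/-- Zero-free degree sequences of length n with largest part exactly n-2. -/
def S (n : ℕ) : Set (Fin n → ℕ) :=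
  {d | d ∈ D n ∧ (∀ i, d i ≤ n - 2) ∧ ∃ i, d i = n - 2}

lemma ncard_nbhd_compl {n : ℕ} (G : SimpleGraph (Fin n)) (u : Fin n) :
    (Gᶜ.neighborSet u).ncard = n - 1 - (G.neighborSet u).ncard := by
  classical
  have hsub : G.neighborSet u ⊆ {u}ᶜ := by
    intro w hw
    simp only [Set.mem_compl_iff, Set.mem_singleton_iff]
    exact fun h => G.ne_of_adj hw (h ▸ rfl)
  have h1 : Gᶜ.neighborSet u = {u}ᶜ \ G.neighborSet u := by
    ext w
    simp only [SimpleGraph.mem_neighborSet, SimpleGraph.compl_adj, Set.mem_diff,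
      Set.mem_compl_iff, Set.mem_singleton_iff]
    constructor
    · rintro ⟨h1, h2⟩; exact ⟨fun h => h1 h.symm, h2⟩
    · rintro ⟨h1, h2⟩; exact ⟨fun h => h1 h.symm, h2⟩
  rw [h1, Set.ncard_diff hsub]
  have : ({u} : Set (Fin n)).ncard + ({u}ᶜ : Set (Fin n)).ncard = Nat.card (Fin n) :=
    Set.ncard_add_ncard_compl _
  simp [Set.ncard_singleton, Nat.card_eq_fintype_card] at this
  omega

lemma graphic_comp {n : ℕ} (d : Fin n → ℕ) (h : Graphic n d) :
    Graphic n (fun i => n - 1 - d i.rev) := by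
  obtain ⟨G, hG⟩ := h
  refine ⟨SimpleGraph.comap Fin.rev Gᶜ, fun v => ?_⟩
  have himg : (SimpleGraph.comap Fin.rev Gᶜ).neighborSet v
      = Fin.rev '' (Gᶜ.neighborSet v.rev) := by
    ext w
    simp only [SimpleGraph.mem_neighborSet, SimpleGraph.comap_adj, Set.mem_image]
    constructor
    · intro hw; exact ⟨w.rev, hw, Fin.rev_rev w⟩
    · rintro ⟨x, hx, rfl⟩; rwa [Fin.rev_rev]
  rw [himg, Set.ncard_image_of_injective _ (Fin.rev_injective), ncard_nbhd_compl, hG]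

lemma anti_comp {n : ℕ} {d : Fin n → ℕ} (hd : Antitone d) :
    Antitone (fun i : Fin n => n - 1 - d i.rev) := by
  intro i j hij
  have : j.rev ≤ i.rev := Fin.rev_le_rev.mpr hij
  exact Nat.sub_le_sub_left (hd this) _

lemma mapW {n : ℕ} (hn : 3 ≤ n) {d : Fin n → ℕ} (hd : d ∈ W n) :
    (fun i : Fin n => n - 1 - d i.rev) ∈ S n := by
  obtain ⟨⟨ha, hpos, hg⟩, hlt, i, hi⟩ := hd
  refine ⟨⟨anti_comp ha, fun j => ?_, graphic_comp d hg⟩, fun j => ?_, ⟨i.rev, ?_⟩⟩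
  · show 0 < n - 1 - d j.rev; have := hlt j.rev; omega
  · show n - 1 - d j.rev ≤ n - 2; have := hpos j.rev; omega
  · show n - 1 - d i.rev.rev = n - 2; rw [Fin.rev_rev, hi]; omega

lemma mapS {n : ℕ} (hn : 3 ≤ n) {d : Fin n → ℕ} (hd : d ∈ S n) :
    (fun i : Fin n => n - 1 - d i.rev) ∈ W n := by
  obtain ⟨⟨ha, hpos, hg⟩, hle, i, hi⟩ := hd
  refine ⟨⟨anti_comp ha, fun j => ?_, graphic_comp d hg⟩, fun j => ?_, ⟨i.rev, ?_⟩⟩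
  · show 0 < n - 1 - d j.rev; have := hle j.rev; omega
  · show n - 1 - d j.rev < n - 1; have := hpos j.rev; omega
  · show n - 1 - d i.rev.rev = 1; rw [Fin.rev_rev, hi]; omega

theorem W_equiv_S (n : ℕ) (hn : 3 ≤ n) :
    Nonempty (W n ≃ S n) ∧ (W n).ncard = (S n).ncard := by
  have e : W n ≃ S n :=
    { toFun := fun d => ⟨fun i => n - 1 - d.1 i.rev, mapW hn d.2⟩
      invFun := fun d => ⟨fun i => n - 1 - d.1 i.rev, mapS hn d.2⟩
      left_inv := fun d => by
        ext i
        simp only [Fin.rev_rev]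
        have := d.2.2.1 i
        omega
      right_inv := fun d => by
        ext i
        simp only [Fin.rev_rev]
        have := d.2.2.1 i
        omega }
  refine ⟨⟨e⟩, ?_⟩
  rw [← Nat.card_coe_set_eq, ← Nat.card_coe_set_eq]
  exact Nat.card_congr e
end

section
/- A zero-free degree sequence d = (d_1, ..., d_n) of length n is potentially connected (has a connected realization) if and only if Σ_{i=1}^{n} d_i ≥ 2(n-1). -/
/-- A degree sequence is potentially connected if it has a connected realization. -/
def PotentiallyConnected (n : ℕ) (d : Fin n → ℕ) : Prop :=
  ∃ G : SimpleGraph (Fin n), (∀ v, (G.neighborSet v).ncard = d v) ∧ G.Connected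

namespace SimpleGraph

variable {V : Type*} {G G' : SimpleGraph V} {u v w x a b : V}

lemma sum_ncard_neighborSet [Fintype V] (G : SimpleGraph V) :
    ∑ v, (G.neighborSet v).ncard = 2 * Nat.card G.edgeSet := by
  classical
  simp only [← Nat.card_coe_set_eq, Nat.card_eq_fintype_card, card_neighborSet_eq_degree,
    sum_degrees_eq_twice_card_edges, card_edgeSet]

lemma reachable_le_reachable_of_adj_le (h : G.Adj ≤ G'.Reachable) :
    G.Reachable ≤ G'.Reachable := by
  intro u v huv
  rw [reachable_iff_reflTransGen] at huv
  induction huv with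
  | refl => rfl
  | tail _ hadj ih => exact ih.trans (h _ _ hadj)

lemma ne_of_not_reachable (h : ¬G.Reachable u v) : u ≠ v := fun huv => h (huv ▸ .rfl)

lemma Reachable.deleteEdges_of_not_reachable (huv : G.Reachable u v) (hw : ¬G.Reachable u w) :
    (G.deleteEdges {s(w, x)}).Reachable u v := by
  classical
  obtain ⟨p⟩ := huv
  refine ⟨p.toDeleteEdges _ fun e he hwx => hw ?_⟩
  rw [Set.mem_singleton_iff] at hwx
  subst hwx
  exact ⟨p.takeUntil w (p.fst_mem_support_of_mem_edges he)⟩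

lemma IsAcyclic.card_edgeSet_add_one_le [Finite V] [Nonempty V] (hG : G.IsAcyclic) :
    Nat.card G.edgeSet + 1 ≤ Nat.card V := by
  obtain ⟨F, hGF, -, hF, hFr⟩ :=
    (⊤ : SimpleGraph V).exists_isAcyclic_reachable_eq_le_of_le_of_isAcyclic le_top hG
  have hFconn : F.Connected := by
    rw [connected_iff_exists_forall_reachable, hFr]
    exact ⟨Classical.arbitrary V, fun w => preconnected_top _ w⟩
  rw [← (isTree_iff_connected_and_card.mp ⟨hFconn, hF⟩).2]
  exact Nat.add_le_add_right (Nat.card_mono (Set.toFinite _) (edgeSet_mono hGF)) 1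

lemma IsAcyclic.card_edgeSet_add_two_le [Finite V] (hG : G.IsAcyclic) (huv : ¬G.Reachable u v) :
    Nat.card G.edgeSet + 2 ≤ Nat.card V := by
  have : Nonempty V := ⟨u⟩
  have hadj : ¬G.Adj u v := fun h => huv h.reachable
  have := (hG.sup_edge_of_not_reachable huv).card_edgeSet_add_one_le
  rw [edgeSet_sup, edgeSet_edge_of_ne (ne_of_not_reachable huv), Set.union_singleton,
    Nat.card_coe_set_eq, Set.ncard_insert_of_notMem (G.mem_edgeSet.not.mpr hadj)] at this
  rwa [Nat.card_coe_set_eq]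

lemma exists_not_reachable_of_not_connected (hG : ¬G.Connected) (u : V) :
    ∃ v, ¬G.Reachable u v := by
  simp only [connected_iff_exists_forall_reachable, not_exists, not_forall] at hG
  exact hG u

lemma exists_adj_not_isBridge_of_not_connected [Finite V] [Nonempty V] (hG : ¬G.Connected)
    (hcard : Nat.card V ≤ Nat.card G.edgeSet + 1) : ∃ a b, G.Adj a b ∧ ¬G.IsBridge s(a, b) := by
  have hG' : ¬G.IsAcyclic := fun hacyc => by
    obtain ⟨v, huv⟩ := exists_not_reachable_of_not_connected hG (Classical.arbitrary V)
    have := hacyc.card_edgeSet_add_two_le huv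
    omega
  simpa [isAcyclic_iff_forall_adj_isBridge] using hG'

def twoSwitch (G : SimpleGraph V) (a b w x : V) : SimpleGraph V :=
  G.deleteEdges {s(a, b), s(w, x)} ⊔ edge a w ⊔ edge b x

lemma twoSwitch_swap (G : SimpleGraph V) (a b w x : V) :
    G.twoSwitch a b w x = G.twoSwitch b a x w := by
  ext u v
  simp only [twoSwitch, sup_adj, deleteEdges_adj, edge_adj, Set.mem_insert_iff,
    Set.mem_singleton_iff, Sym2.eq_swap (a := b), Sym2.eq_swap (a := x)]
  tauto

lemma twoSwitch_comm (G : SimpleGraph V) (a b w x : V) :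
    G.twoSwitch a b w x = G.twoSwitch w x a b := by
  ext u v
  simp only [twoSwitch, sup_adj, deleteEdges_adj, edge_adj, Set.mem_insert_iff,
    Set.mem_singleton_iff]
  tauto

lemma neighborSet_twoSwitch_left (hab : G.Adj a b) (haw : a ≠ w) (hax : a ≠ x) :
    (G.twoSwitch a b w x).neighborSet a = insert w (G.neighborSet a \ {b}) := by
  ext u
  simp only [twoSwitch, mem_neighborSet, sup_adj, deleteEdges_adj, edge_adj, Set.mem_insert_iff,
    Set.mem_singleton_iff, Set.mem_sdiff, Sym2.eq_iff]
  grind [Adj.ne]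

lemma neighborSet_twoSwitch_of_ne (ha : v ≠ a) (hb : v ≠ b) (hw : v ≠ w) (hx : v ≠ x) :
    (G.twoSwitch a b w x).neighborSet v = G.neighborSet v := by
  ext u
  simp only [twoSwitch, mem_neighborSet, sup_adj, deleteEdges_adj, edge_adj, Set.mem_insert_iff,
    Set.mem_singleton_iff, Sym2.eq_iff]
  tauto

lemma ncard_neighborSet_twoSwitch_left [Finite V] (hab : G.Adj a b) (hwx : G.Adj w x)
    (h : ¬G.Reachable a w) :
    ((G.twoSwitch a b w x).neighborSet a).ncard = (G.neighborSet a).ncard := by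
  have hax : ¬G.Reachable a x := fun h' => h (h'.trans hwx.symm.reachable)
  have hnaw : w ∉ G.neighborSet a \ {b} := fun h' => h (Adj.reachable h'.1)
  rw [neighborSet_twoSwitch_left hab (ne_of_not_reachable h) (ne_of_not_reachable hax),
    Set.ncard_insert_of_notMem hnaw,
    Set.ncard_sdiff_singleton_add_one (show b ∈ G.neighborSet a from hab)]

lemma ncard_neighborSet_twoSwitch [Finite V] (hab : G.Adj a b) (hwx : G.Adj w x)
    (h : ¬G.Reachable a w) (v : V) :
    ((G.twoSwitch a b w x).neighborSet v).ncard = (G.neighborSet v).ncard := by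
  have hbx : ¬G.Reachable b x := fun h' => h (hab.reachable.trans (h'.trans hwx.symm.reachable))
  by_cases hva : v = a
  · subst hva
    exact ncard_neighborSet_twoSwitch_left hab hwx h
  by_cases hvb : v = b
  · subst hvb
    rw [twoSwitch_swap]
    exact ncard_neighborSet_twoSwitch_left hab.symm hwx.symm hbx
  by_cases hvw : v = w
  · subst hvw
    rw [twoSwitch_comm]
    exact ncard_neighborSet_twoSwitch_left hwx hab (fun h' => h h'.symm)
  by_cases hvx : v = x
  · subst hvx
    rw [twoSwitch_comm, twoSwitch_swap]
    exact ncard_neighborSet_twoSwitch_left hwx.symm hab.symm (fun h' => hbx h'.symm)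
  rw [neighborSet_twoSwitch_of_ne hva hvb hvw hvx]

lemma adj_twoSwitch_left (haw : a ≠ w) : (G.twoSwitch a b w x).Adj a w :=
  .inl <| .inr <| (edge_adj ..).mpr ⟨.inl ⟨rfl, rfl⟩, haw⟩

lemma reachable_le_reachable_twoSwitch (hab : G.Adj a b) (hbr : ¬G.IsBridge s(a, b))
    (hwx : G.Adj w x) (h : ¬G.Reachable a w) :
    G.Reachable ≤ (G.twoSwitch a b w x).Reachable := by
  have hdel : G.deleteEdges {s(a, b), s(w, x)} ≤ G.twoSwitch a b w x :=
    le_sup_left.trans le_sup_left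
  have hab' : (G.twoSwitch a b w x).Reachable a b := by
    rw [isBridge_iff, not_not] at hbr
    have := hbr.deleteEdges_of_not_reachable (x := x)
      (fun h' => h (h'.mono (deleteEdges_le _)))
    rw [deleteEdges_deleteEdges, Set.singleton_union] at this
    exact this.mono hdel
  have haw : (G.twoSwitch a b w x).Adj a w := adj_twoSwitch_left (ne_of_not_reachable h)
  have hbx : (G.twoSwitch a b w x).Adj b x := by
    rw [twoSwitch_swap]
    exact adj_twoSwitch_left <| ne_of_not_reachable fun h' =>
      h (hab.reachable.trans (h'.trans hwx.symm.reachable))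
  have hwx' : (G.twoSwitch a b w x).Reachable w x :=
    haw.symm.reachable.trans (hab'.trans hbx.reachable)
  refine reachable_le_reachable_of_adj_le fun u v huv => ?_
  by_cases he : s(u, v) = s(a, b) ∨ s(u, v) = s(w, x)
  · rcases he with he | he <;> rcases Sym2.eq_iff.mp he with ⟨rfl, rfl⟩ | ⟨rfl, rfl⟩
    exacts [hab', hab'.symm, hwx', hwx'.symm]
  · refine (hdel <| (deleteEdges_adj ..).mpr ⟨huv, ?_⟩).reachable
    simpa only [Set.mem_insert_iff, Set.mem_singleton_iff] using he

theorem exists_connected_ncard_neighborSet_eq [Fintype V] [Nonempty V] (G : SimpleGraph V)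
    (hpos : ∀ v, 0 < (G.neighborSet v).ncard) (hcard : Nat.card V ≤ Nat.card G.edgeSet + 1) :
    ∃ H : SimpleGraph V,
      (∀ v, (H.neighborSet v).ncard = (G.neighborSet v).ncard) ∧ H.Connected := by
  classical
  set S := {H : SimpleGraph V | ∀ v, (H.neighborSet v).ncard = (G.neighborSet v).ncard}
  obtain ⟨H, hHS, hmax⟩ := S.toFinite.exists_maximalFor Reachable S ⟨G, fun _ => rfl⟩
  refine ⟨H, hHS, by_contra fun hH => ?_⟩
  have hcardH : Nat.card H.edgeSet = Nat.card G.edgeSet := by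
    have := G.sum_ncard_neighborSet
    rw [← Finset.sum_congr rfl fun v _ => hHS v, H.sum_ncard_neighborSet] at this
    omega
  obtain ⟨a, b, hab, hbr⟩ := exists_adj_not_isBridge_of_not_connected hH (hcardH ▸ hcard)
  obtain ⟨w, hw⟩ := exists_not_reachable_of_not_connected hH a
  obtain ⟨x, hwx⟩ : (H.neighborSet w).Nonempty := Set.nonempty_of_ncard_ne_zero
    (hHS w ▸ (hpos w).ne')
  have hswitch : H.twoSwitch a b w x ∈ S := fun v =>
    (ncard_neighborSet_twoSwitch hab hwx hw v).trans (hHS v)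
  have hle := reachable_le_reachable_twoSwitch hab hbr hwx hw
  exact hw (hmax hswitch hle a w (adj_twoSwitch_left (ne_of_not_reachable hw)).reachable)

end SimpleGraph

theorem potentially_connected_iff (n : ℕ) (hn : 1 ≤ n) (d : Fin n → ℕ) (hd : d ∈ D n) :
    PotentiallyConnected n d ↔ 2 * (n - 1) ≤ ∑ i, d i := by
  obtain ⟨-, hpos, G, hG⟩ := hd
  have : Nonempty (Fin n) := ⟨⟨0, hn⟩⟩
  have hsum : ∀ H : SimpleGraph (Fin n), (∀ v, (H.neighborSet v).ncard = d v) →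
      ∑ i, d i = 2 * Nat.card H.edgeSet := fun H hH => by
    rw [← H.sum_ncard_neighborSet, Finset.sum_congr rfl fun v _ => hH v]
  constructor
  · rintro ⟨H, hH, hconn⟩
    rw [hsum H hH]
    have := hconn.card_vert_le_card_edgeSet_add_one
    rw [Nat.card_fin] at this
    omega
  · rw [hsum G hG]
    intro h
    obtain ⟨H, hH, hconn⟩ := G.exists_connected_ncard_neighborSet_eq (fun v => hG v ▸ hpos v)
      (by rw [Nat.card_fin]; omega)
    exact ⟨H, fun v => (hH v).trans (hG v), hconn⟩
end

section
/- For n ≥ 3, every degree sequence in D_b(n) (potentially biconnected, i.e., having a 2-connected realization) satisfies d_n ≥ 2 and Σ_{i=1}^{n} d_i ≥ 2n - 4 + 2d_1, where d_1 is the largest and d_n the smallest part. -/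
/-- A graph on n vertices is biconnected (2-connected): at least 3 vertices and
deleting any single vertex leaves a connected graph. -/
def Biconnected {n : ℕ} (G : SimpleGraph (Fin n)) : Prop :=
  3 ≤ n ∧ ∀ v : Fin n, (G.induce ({v}ᶜ : Set (Fin n))).Connected

/-- A degree sequence is potentially biconnected if it has a biconnected realization. -/
def PotentiallyBiconnected (n : ℕ) (d : Fin n → ℕ) : Prop :=
  ∃ G : SimpleGraph (Fin n), (∀ v, (G.neighborSet v).ncard = d v) ∧ Biconnected G

/-! Deleting any vertex `v` of a biconnected graph leaves a connected graph on `n - 1` vertices, hence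
at least `n - 2` edges not incident to `v`; together with the `deg v` edges at `v` and the handshake
lemma this gives `∑ dᵢ ≥ 2(n - 2) + 2 deg v` for every vertex, in particular for `v = 0`.
As `n ≥ 3`, no vertex is isolated in any `G - u`: so `v` has a neighbour `a ≠ u` for some `u ≠ v`,
and then a neighbour `b ≠ a`. -/

open Finset
namespace SimpleGraph
variable {V : Type*} (G : SimpleGraph V)

theorem ncard_neighborSet_eq_degree_s14 (v : V) [Fintype (G.neighborSet v)] :
    (G.neighborSet v).ncard = G.degree v := by
  rw [← card_neighborSet_eq_degree, ← Nat.card_coe_set_eq, Nat.card_eq_fintype_card]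

theorem exists_adj_ne_of_connected_induce_compl_singleton {u v : V}
    [Nontrivial ({u}ᶜ : Set V)] (h : (G.induce {u}ᶜ).Connected) (hvu : v ≠ u) :
    ∃ w ≠ u, G.Adj v w := by
  obtain ⟨⟨w, hw⟩, hadj⟩ := not_forall_not.mp (h.preconnected.not_isIsolated ⟨v, hvu⟩)
  exact ⟨w, hw, hadj⟩

variable [Fintype V] [DecidableRel G.Adj]

theorem two_le_degree_of_forall_connected_induce_compl_singleton
    (hV : 3 ≤ Fintype.card V) (h : ∀ u, (G.induce {u}ᶜ).Connected) (v : V) :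
    2 ≤ G.degree v := by
  classical
  have : ∀ u : V, Nontrivial ({u}ᶜ : Set V) := fun u => by
    rw [← Fintype.one_lt_card_iff_nontrivial, Fintype.card_compl_set, Set.card_singleton]
    omega
  have : Nontrivial V := Fintype.one_lt_card_iff_nontrivial.mp (by omega)
  obtain ⟨u, hu⟩ := exists_ne v
  obtain ⟨a, -, hva⟩ := G.exists_adj_ne_of_connected_induce_compl_singleton (h u) hu.symm
  obtain ⟨b, hba, hvb⟩ := G.exists_adj_ne_of_connected_induce_compl_singleton (h a) hva.ne
  rw [← card_neighborFinset_eq_degree]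
  exact one_lt_card.mpr ⟨a, by simpa using hva, b, by simpa using hvb, hba.symm⟩

theorem card_sub_two_add_degree_le_card_edgeFinset [DecidableEq V] {v : V}
    (h : (G.induce {v}ᶜ).Connected) : Fintype.card V - 2 + G.degree v ≤ #G.edgeFinset := by
  have hconn := h.card_vert_le_card_edgeSet_add_one
  rw [Nat.card_eq_fintype_card, Nat.card_eq_fintype_card, ← edgeFinset_card,
    card_edgeFinset_induce_compl_singleton, card_edgeFinset_deleteIncidenceSet,
    Fintype.card_compl_set, Set.card_singleton] at hconn
  have := G.degree_le_card_edgeFinset v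
  omega

end SimpleGraph

open SimpleGraph in
theorem potentially_biconnected_necessary (n : ℕ) (hn : 3 ≤ n) (d : Fin n → ℕ)
    (h : PotentiallyBiconnected n d) :
    (∀ i, 2 ≤ d i) ∧ 2 * n - 4 + 2 * d ⟨0, by omega⟩ ≤ ∑ i, d i := by
  classical
  obtain ⟨G, hdeg, -, hconn⟩ := h
  obtain rfl : d = fun v => G.degree v :=
    funext fun v => (hdeg v).symm.trans (G.ncard_neighborSet_eq_degree_s14 v)
  refine ⟨G.two_le_degree_of_forall_connected_induce_compl_singleton (by simpa) hconn, ?_⟩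
  have hedges := G.card_sub_two_add_degree_le_card_edgeFinset (hconn ⟨0, by omega⟩)
  rw [Fintype.card_fin] at hedges
  simp only [sum_degrees_eq_twice_card_edges]
  omega
end

section
/- If a non-increasing positive integer sequence l_1 is graphic and a non-increasing positive integer sequence l_2 of the same length and the same sum is majorized by l_1, then l_2 is also graphic. -/
/-!
Let `a ≠ b` with `a` majorizing `b` and `b` non-increasing. At the first index `j` with
`a j < b j`, the prefix-sum inequality forces an earlier `i` with `a i > b i`, and then
`a i > b i ≥ b j > a j`, so `a i ≥ a j + 2`. Moving one unit from entry `i` to entry `j` keeps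
`a` graphic (a neighbour `w` of `i` that is not adjacent to `j` exists by the degree gap; replace
the edge `iw` by `jw`), keeps the majorization, and lowers `∑ (a - b)⁺`. Iterating reaches `b`.
-/

def unitTransfer {ι : Type*} [DecidableEq ι] (d : ι → ℕ) (i j : ι) : ι → ℕ :=
  Function.update (Function.update d i (d i - 1)) j (d j + 1)

section unitTransfer

variable {ι : Type*} [DecidableEq ι] {d e : ι → ℕ} {i j : ι}

lemma unitTransfer_add_single (hij : i ≠ j) (hi : 0 < d i) :
    unitTransfer d i j + Pi.single i 1 = d + Pi.single j 1 := by
  ext x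
  simp only [unitTransfer, Pi.add_apply, Pi.single_apply, Function.update_apply]
  grind

lemma sum_sub_unitTransfer_lt [Fintype ι] (hij : i ≠ j) (hi : e i < d i) (hj : d j < e j) :
    ∑ x, (unitTransfer d i j x - e x) < ∑ x, (d x - e x) := by
  refine Finset.sum_lt_sum (fun x _ => ?_) ⟨i, Finset.mem_univ _, ?_⟩
  · simp only [unitTransfer, Function.update_apply]
    grind
  · rw [unitTransfer, Function.update_of_ne hij, Function.update_self]
    omega

end unitTransfer

namespace SimpleGraph

variable {V : Type*} (G : SimpleGraph V) {a b u v x : V}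

lemma neighborSet_sup_edge_left (hab : a ≠ b) :
    (G ⊔ edge a b).neighborSet a = insert b (G.neighborSet a) := by
  ext y
  simp only [mem_neighborSet, sup_adj, edge_adj, Set.mem_insert_iff]
  grind

lemma neighborSet_sup_edge_of_ne (hxa : x ≠ a) (hxb : x ≠ b) :
    (G ⊔ edge a b).neighborSet x = G.neighborSet x := by
  ext y
  simp [edge_adj, hxa, hxb]

lemma neighborSet_sdiff_edge_left :
    (G \ edge a b).neighborSet a = G.neighborSet a \ {b} := by
  ext y
  simp only [mem_neighborSet, sdiff_adj, edge_adj, Set.mem_sdiff, Set.mem_singleton_iff]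
  have := fun h : G.Adj a y => h.ne
  grind

lemma neighborSet_sdiff_edge_of_ne (hxa : x ≠ a) (hxb : x ≠ b) :
    (G \ edge a b).neighborSet x = G.neighborSet x := by
  ext y
  simp [edge_adj, hxa, hxb]

lemma exists_adj_ne_not_adj_of_ncard_neighborSet_lt [Finite V]
    (h : (G.neighborSet v).ncard + 1 < (G.neighborSet u).ncard) :
    ∃ w, G.Adj u w ∧ w ≠ v ∧ ¬G.Adj v w := by
  have hlt : (insert v (G.neighborSet v)).ncard < (G.neighborSet u).ncard :=
    (Set.ncard_insert_le _ _).trans_lt h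
  obtain ⟨w, huw, hw⟩ := Set.exists_mem_notMem_of_ncard_lt_ncard hlt
  simp only [Set.mem_insert_iff, mem_neighborSet, not_or] at hw
  exact ⟨w, huw, hw⟩

theorem exists_ncard_neighborSet_eq_unitTransfer [Finite V] [DecidableEq V] (huv : u ≠ v)
    (h : (G.neighborSet v).ncard + 2 ≤ (G.neighborSet u).ncard) :
    ∃ G' : SimpleGraph V, ∀ x,
      (G'.neighborSet x).ncard = unitTransfer (fun x => (G.neighborSet x).ncard) u v x := by
  obtain ⟨w, huw, hwv, hvw⟩ :=
    G.exists_adj_ne_not_adj_of_ncard_neighborSet_lt (u := u) (v := v) (by omega)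
  have hwu : w ≠ u := huw.ne'
  refine ⟨G \ edge u w ⊔ edge v w, fun x => ?_⟩
  simp only [unitTransfer]
  by_cases hxv : x = v
  · subst hxv
    rw [neighborSet_sup_edge_left _ hwv.symm, neighborSet_sdiff_edge_of_ne _ huv.symm hwv.symm,
      Set.ncard_insert_of_notMem (show w ∉ G.neighborSet x from hvw), Function.update_self]
  rw [Function.update_of_ne hxv]
  by_cases hxu : x = u
  · subst hxu
    rw [neighborSet_sup_edge_of_ne _ huv hwu.symm, neighborSet_sdiff_edge_left,
      Set.ncard_sdiff_singleton_of_mem (show w ∈ G.neighborSet x from huw), Function.update_self]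
  rw [Function.update_of_ne hxu]
  by_cases hxw : x = w
  · subst hxw
    rw [edge_comm v, neighborSet_sup_edge_left _ hwv, edge_comm u, neighborSet_sdiff_edge_left,
      Set.ncard_insert_of_notMem (fun h => hvw (h.1.symm)),
      Set.ncard_sdiff_singleton_of_mem (show u ∈ G.neighborSet x from huw.symm)]
    have : 0 < (G.neighborSet x).ncard := (Set.ncard_pos).2 ⟨u, huw.symm⟩
    omega
  rw [neighborSet_sup_edge_of_ne _ hxv hxw, neighborSet_sdiff_edge_of_ne _ hxu hxw]

end SimpleGraph

section Majorization

variable {n : ℕ}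

def prefixSum (d : Fin n → ℕ) (m : ℕ) : ℕ :=
  ∑ i ∈ Finset.univ.filter (fun i : Fin n => (i : ℕ) < m), d i

def Majorizes (a b : Fin n → ℕ) : Prop :=
  (∀ m, prefixSum b m ≤ prefixSum a m) ∧ ∑ i, a i = ∑ i, b i

variable {a b d : Fin n → ℕ} {i j : Fin n}

lemma prefixSum_add (d e : Fin n → ℕ) (m : ℕ) :
    prefixSum (d + e) m = prefixSum d m + prefixSum e m :=
  Finset.sum_add_distrib

lemma prefixSum_single (i : Fin n) (m : ℕ) :
    prefixSum (Pi.single i 1) m = if (i : ℕ) < m then 1 else 0 := by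
  simp [prefixSum, Finset.sum_pi_single']

lemma prefixSum_of_le {m : ℕ} (hm : n ≤ m) (d : Fin n → ℕ) :
    prefixSum d m = ∑ i, d i := by
  rw [prefixSum, Finset.filter_true_of_mem fun i _ => i.is_lt.trans_le hm]

lemma prefixSum_succ (d : Fin n → ℕ) (j : Fin n) :
    prefixSum d (j + 1) = prefixSum d j + d j := by
  have : Finset.univ.filter (fun i : Fin n => (i : ℕ) < j + 1) =
      insert j (Finset.univ.filter (fun i : Fin n => (i : ℕ) < j)) := by
    ext i
    simp only [Finset.mem_filter, Finset.mem_univ, true_and, Finset.mem_insert, Fin.ext_iff]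
    omega
  rw [prefixSum, this, Finset.sum_insert (by simp), add_comm]
  rfl

lemma prefixSum_unitTransfer (hij : i ≠ j) (hi : 0 < d i) (m : ℕ) :
    prefixSum (unitTransfer d i j) m + (if (i : ℕ) < m then 1 else 0) =
      prefixSum d m + (if (j : ℕ) < m then 1 else 0) := by
  rw [← prefixSum_single, ← prefixSum_single, ← prefixSum_add, ← prefixSum_add,
    unitTransfer_add_single hij hi]

namespace Majorizes

lemma exists_lt (hab : Majorizes a b) (hne : a ≠ b) : ∃ j, a j < b j := by
  by_contra! hle
  refine hne (funext fun x => ?_)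
  have hle' : ∀ x ∈ Finset.univ, b x ≤ a x := fun x _ => hle x
  exact ((Finset.sum_eq_sum_iff_of_le hle').1 hab.2.symm x (Finset.mem_univ x)).symm

lemma exists_lt_of_lt (hab : Majorizes a b) (hj : a j < b j) :
    ∃ i < j, b i < a i := by
  have hprefix : prefixSum b j < prefixSum a j := by
    have := hab.1 (j + 1)
    rw [prefixSum_succ, prefixSum_succ] at this
    omega
  obtain ⟨i, hi, hlt⟩ := Finset.exists_lt_of_sum_lt hprefix
  exact ⟨i, Fin.lt_def.2 (Finset.mem_filter.1 hi).2, hlt⟩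

lemma unitTransfer (hab : Majorizes a b) (hij : i < j) (hi : b i < a i)
    (hmin : ∀ t < j, b t ≤ a t) : Majorizes (unitTransfer a i j) b := by
  have hstrict : ∀ m, (i : ℕ) < m → m ≤ j → prefixSum b m < prefixSum a m := by
    intro m him hmj
    refine Finset.sum_lt_sum (fun t ht => hmin t ?_) ⟨i, by simpa using him, hi⟩
    simp only [Finset.mem_filter, Finset.mem_univ, true_and] at ht
    exact Fin.lt_def.2 (ht.trans_le hmj)
  have key := prefixSum_unitTransfer (d := a) hij.ne (by omega)
  refine ⟨fun m => ?_, ?_⟩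
  · have hkey := key m
    have := hab.1 m
    have := hstrict m
    have := Fin.lt_def.1 hij
    split_ifs at hkey <;> omega
  · have := key n
    rw [prefixSum_of_le le_rfl, prefixSum_of_le le_rfl, if_pos i.is_lt, if_pos j.is_lt] at this
    exact (Nat.add_right_cancel this).trans hab.2

end Majorizes

end Majorization

lemma Graphic.unitTransfer {n : ℕ} {d : Fin n → ℕ} {i j : Fin n} (hg : Graphic n d)
    (hij : i ≠ j) (h : d j + 2 ≤ d i) : Graphic n (unitTransfer d i j) := by
  obtain ⟨G, hG⟩ := hg
  obtain rfl : (fun x => (G.neighborSet x).ncard) = d := funext hG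
  exact G.exists_ncard_neighborSet_eq_unitTransfer hij h

theorem Graphic.of_majorizes {n : ℕ} {a b : Fin n → ℕ} (hb : Antitone b) (hab : Majorizes a b)
    (ha : Graphic n a) : Graphic n b := by
  by_cases hne : a = b
  · exact hne ▸ ha
  obtain ⟨j, hj : a j < b j, hmin⟩ := wellFounded_lt.has_min {j | a j < b j} (hab.exists_lt hne)
  have hfirst : ∀ t < j, b t ≤ a t := fun t ht => not_lt.1 fun h => hmin t h ht
  obtain ⟨i, hij, hi⟩ := hab.exists_lt_of_lt hj
  have hgap : a j + 2 ≤ a i := by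
    have := hb hij.le
    omega
  exact Graphic.of_majorizes hb (hab.unitTransfer hij hi hfirst) (ha.unitTransfer hij.ne hgap)
termination_by ∑ x, (a x - b x)
decreasing_by exact sum_sub_unitTransfer_lt hij.ne hi hj

theorem graphic_of_majorized_general (n : ℕ) (l1 l2 : Fin n → ℕ)
    (h2 : Antitone l2)
    (hsum : ∑ i, l1 i = ∑ i, l2 i)
    (hmaj : ∀ j : ℕ, ∑ i ∈ Finset.univ.filter (fun i : Fin n => (i : ℕ) < j), l2 i ≤
        ∑ i ∈ Finset.univ.filter (fun i : Fin n => (i : ℕ) < j), l1 i)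
    (hg : Graphic n l1) : Graphic n l2 :=
  hg.of_majorizes h2 ⟨hmaj, hsum⟩

theorem graphic_of_majorized (n : ℕ) (l1 l2 : Fin n → ℕ)
    (h1 : Antitone l1) (h2 : Antitone l2)
    (hp1 : ∀ i, 0 < l1 i) (hp2 : ∀ i, 0 < l2 i)
    (hsum : ∑ i, l1 i = ∑ i, l2 i)
    (hmaj : ∀ j : ℕ, ∑ i ∈ Finset.univ.filter (fun i : Fin n => (i : ℕ) < j), l2 i ≤
        ∑ i ∈ Finset.univ.filter (fun i : Fin n => (i : ℕ) < j), l1 i)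
    (hg : Graphic n l1) : Graphic n l2 :=
  graphic_of_majorized_general n l1 l2 h2 hsum hmaj hg
end
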